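/- Let n ≥ 1, let f_0, …, f_n be n+1 polynomials in ℚ[x_0, …, x_{n-1}], let C be their Dixon cancellation matrix, and let d : {0,…,n-1} → ℕ satisfy d_k ≥ 1 and the degree of every f_j in x_k is at most d_k. Suppose θ ∈ ℚ[x_0,…,x_{n-1}, x̄_0,…,x̄_{n-1}] satisfies θ · ∏_{k=0}^{n-1}(x_k − x̄_k) = det C. Then the number of distinct exponent vectors in the unbarred variables x_0,…,x_{n-1} occurring among the monomials in the support of θ (i.e., the cardinality of the image of the support of θ under restriction of exponent vectors to the unbarred variables) is at most ∏_{k=0}^{n-1} (k+1)·d_k = n! · ∏_{k=0}^{n-1} d_k. (This is the bound on the number of rows of the Dixon matrix.) -/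

import Mathlib

open MvPolynomial

/-- The `i`-th Dixon substitution homomorphism `φ_i : ℚ[x] → ℚ[x, x̄]`,
sending `x_k ↦ x̄_k` for `k < i` and `x_k ↦ x_k` for `k ≥ i`.
Here `Sum.inl k` is the unbarred variable `x_k` and `Sum.inr k` is the barred `x̄_k`. -/
noncomputable def dixonPhi (n : ℕ) (i : Fin (n + 1)) :
    MvPolynomial (Fin n) ℚ →ₐ[ℚ] MvPolynomial (Fin n ⊕ Fin n) ℚ :=
  aeval (fun k : Fin n => if (k : ℕ) < (i : ℕ) then X (Sum.inr k) else X (Sum.inl k))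

/-- The Dixon cancellation matrix of `f_0, …, f_n`, with entries `C i j = φ_i (f j)`. -/
noncomputable def dixonCancellationMatrix (n : ℕ)
    (f : Fin (n + 1) → MvPolynomial (Fin n) ℚ) :
    Matrix (Fin (n + 1)) (Fin (n + 1)) (MvPolynomial (Fin n ⊕ Fin n) ℚ) :=
  fun i j => dixonPhi n i (f j)

/-!
The variable `x_k` survives `φ_i` only for `i ≤ k`, so in the Leibniz expansion of `det C` every
term has `x_k`-degree at most `(k + 1) d_k`. Over a domain `x_k`-degrees add under multiplication,
and `∏ (x_l - x̄_l)` has `x_k`-degree `1`; hence every monomial of `θ` has `x_k`-exponent below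
`(k + 1) d_k`, and there are at most `∏ (k + 1) d_k = n! ∏ d_k` such unbarred exponent vectors.
-/

namespace MvPolynomial

variable {σ τ R : Type*}

theorem degreeOf_rename_of_notMem_range [CommSemiring R] {f : σ → τ} {i : τ}
    (hi : i ∉ Set.range f) (p : MvPolynomial σ R) : degreeOf i (rename f p) = 0 := by
  have hvars : i ∉ (rename f p).vars := fun h => by
    obtain ⟨j, -, rfl⟩ := mem_vars_rename f p h
    exact hi ⟨j, rfl⟩
  exact Nat.le_zero.mp <| degreeOf_le_iff.mpr fun m hm => (mem_support_notMem_vars_zero hm hvars).le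

theorem degreeOf_det_le [CommRing R] {ι : Type*} [Fintype ι] [DecidableEq ι]
    (M : Matrix ι ι (MvPolynomial σ R)) (i : σ) (b : ι → ℕ)
    (hM : ∀ r c, degreeOf i (M r c) ≤ b r) : degreeOf i M.det ≤ ∑ r, b r := by
  rw [Matrix.det_apply']
  refine (degreeOf_sum_le _ _ _).trans (Finset.sup_le fun τ _ => ?_)
  rw [← map_intCast (C : R →+* MvPolynomial σ R)]
  calc degreeOf i (C _ * ∏ c, M (τ c) c)
      ≤ ∑ c, degreeOf i (M (τ c) c) := (degreeOf_C_mul_le _ _ _).trans (degreeOf_prod_le _ _ _)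
    _ ≤ ∑ c, b (τ c) := Finset.sum_le_sum fun c _ => hM _ _
    _ = ∑ r, b r := Equiv.sum_comp τ b

variable [CommRing R] {a b : σ}

theorem degreeOf_X_sub_X_of_ne {i : σ} (ha : i ≠ a) (hb : i ≠ b) :
    degreeOf i (X a - X b : MvPolynomial σ R) = 0 :=
  Nat.le_zero.mp <| (degreeOf_sub_le _ _ _).trans <| by
    simp [degreeOf_X_of_ne ha, degreeOf_X_of_ne hb]

variable [Nontrivial R]

theorem degreeOf_X_sub_X_left (h : a ≠ b) : degreeOf a (X a - X b : MvPolynomial σ R) = 1 := by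
  rw [sub_eq_add_neg, degreeOf_add_eq_of_degreeOf_lt] <;>
    simp [degreeOf_neg, degreeOf_X_of_ne h]

theorem degreeOf_inl_prod_X_inl_sub_X_inr [NoZeroDivisors R] [Fintype σ] (k : σ) :
    degreeOf (Sum.inl k)
      (∏ l, (X (Sum.inl l) - X (Sum.inr l)) : MvPolynomial (σ ⊕ σ) R) = 1 := by
  classical
  have hl : ∀ l, degreeOf (Sum.inl k) (X (Sum.inl l) - X (Sum.inr l) : MvPolynomial (σ ⊕ σ) R) =
      if l = k then 1 else 0 := by
    intro l
    split_ifs with h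
    · subst h; exact degreeOf_X_sub_X_left Sum.inl_ne_inr
    · exact degreeOf_X_sub_X_of_ne (by simpa [eq_comm] using h) Sum.inl_ne_inr
  rw [degreeOf_prod_eq _ _ fun l _ => ne_zero_of_degreeOf_ne_zero (i := Sum.inl l) ?_]
  · simp [hl]
  · simp [degreeOf_X_sub_X_left Sum.inl_ne_inr]

end MvPolynomial

open MvPolynomial

theorem Finset.card_le_prod_of_forall_apply_lt {ι : Type*} [Fintype ι] [DecidableEq ι]
    (s : Finset (ι →₀ ℕ)) (b : ι → ℕ) (hs : ∀ m ∈ s, ∀ i, m i < b i) :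
    s.card ≤ ∏ i, b i := by
  calc s.card ≤ (Fintype.piFinset fun i => Finset.range (b i)).card :=
        Finset.card_le_card_of_injOn (⇑) (fun m hm => by simpa using hs m hm)
          DFunLike.coe_injective.injOn
    _ = ∏ i, b i := by simp

theorem Fin.prod_univ_val_add_one_mul (n : ℕ) (d : Fin n → ℕ) :
    ∏ k : Fin n, ((k : ℕ) + 1) * d k = n.factorial * ∏ k, d k := by
  rw [Finset.prod_mul_distrib, Fin.prod_univ_eq_prod_range (· + 1),
    Finset.prod_range_add_one_eq_factorial]

def dixonVar (n : ℕ) (i : Fin (n + 1)) (k : Fin n) : Fin n ⊕ Fin n :=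
  if (k : ℕ) < i then Sum.inr k else Sum.inl k

theorem dixonVar_injective (n : ℕ) (i : Fin (n + 1)) : Function.Injective (dixonVar n i) := by
  intro a b h
  unfold dixonVar at h
  split_ifs at h <;> simpa using h

theorem dixonPhi_eq_rename (n : ℕ) (i : Fin (n + 1)) :
    dixonPhi n i = rename (dixonVar n i) := by
  ext k
  simp [dixonPhi, dixonVar, apply_ite X]

theorem degreeOf_inl_dixonPhi (n : ℕ) (i : Fin (n + 1)) (k : Fin n)
    (p : MvPolynomial (Fin n) ℚ) :
    degreeOf (Sum.inl k) (dixonPhi n i p) = if (i : ℕ) ≤ k then degreeOf k p else 0 := by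
  rw [dixonPhi_eq_rename]
  split_ifs with h
  · have hk : dixonVar n i k = Sum.inl k := if_neg (by omega)
    rw [← hk, degreeOf_rename_of_injective (dixonVar_injective n i)]
  · refine degreeOf_rename_of_notMem_range ?_ p
    rintro ⟨j, hj⟩
    by_cases hji : (j : ℕ) < i
    · simp [dixonVar, hji] at hj
    · simp only [dixonVar, hji, if_false, Sum.inl.injEq] at hj
      subst hj
      exact h (not_lt.mp hji)

theorem degreeOf_inl_det_dixonCancellationMatrix_le (n : ℕ)
    (f : Fin (n + 1) → MvPolynomial (Fin n) ℚ) (d : Fin n → ℕ)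
    (hd : ∀ j k, degreeOf k (f j) ≤ d k) (k : Fin n) :
    degreeOf (Sum.inl k) (dixonCancellationMatrix n f).det ≤ ((k : ℕ) + 1) * d k := by
  calc degreeOf (Sum.inl k) (dixonCancellationMatrix n f).det
      ≤ ∑ i : Fin (n + 1), if (i : ℕ) ≤ k then d k else 0 := by
        refine degreeOf_det_le _ _ _ fun i j => ?_
        rw [dixonCancellationMatrix, degreeOf_inl_dixonPhi]
        split_ifs
        exacts [hd j k, le_rfl]
    _ = ((k : ℕ) + 1) * d k := by
        rw [Finset.sum_ite, Finset.sum_const_zero, add_zero, Finset.sum_const, smul_eq_mul]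
        have hrows : (Finset.univ.filter fun i : Fin (n + 1) => (i : ℕ) ≤ k) =
            Finset.Iic k.castSucc := by
          ext i
          simp [Fin.le_def]
        rw [hrows, Fin.card_Iic, Fin.val_castSucc]

theorem degreeOf_inl_lt_of_mul_prod_eq_det (n : ℕ)
    (f : Fin (n + 1) → MvPolynomial (Fin n) ℚ) (d : Fin n → ℕ)
    (hd : ∀ j k, degreeOf k (f j) ≤ d k) (θ : MvPolynomial (Fin n ⊕ Fin n) ℚ)
    (hθ : θ * ∏ k : Fin n, (X (Sum.inl k) - X (Sum.inr k)) =
        (dixonCancellationMatrix n f).det) (hθ0 : θ ≠ 0) (k : Fin n) :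
    degreeOf (Sum.inl k) θ < ((k : ℕ) + 1) * d k := by
  have hP : (∏ l : Fin n, (X (Sum.inl l) - X (Sum.inr l)) : MvPolynomial _ ℚ) ≠ 0 :=
    ne_zero_of_degreeOf_ne_zero (i := Sum.inl k) (by simp [degreeOf_inl_prod_X_inl_sub_X_inr])
  have hdeg := degreeOf_mul_eq (n := Sum.inl k) hθ0 hP
  rw [hθ, degreeOf_inl_prod_X_inl_sub_X_inr] at hdeg
  have := degreeOf_inl_det_dixonCancellationMatrix_le n f d hd k
  omega

theorem dixon_poly_unbarred_monomials_card_le_general (n : ℕ)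
    (f : Fin (n + 1) → MvPolynomial (Fin n) ℚ) (d : Fin n → ℕ)
    (hd : ∀ j : Fin (n + 1), ∀ k : Fin n, degreeOf k (f j) ≤ d k)
    (θ : MvPolynomial (Fin n ⊕ Fin n) ℚ)
    (hθ : θ * ∏ k : Fin n, (X (Sum.inl k) - X (Sum.inr k)) =
        (dixonCancellationMatrix n f).det) :
    (θ.support.image fun m : (Fin n ⊕ Fin n) →₀ ℕ =>
        Finsupp.comapDomain Sum.inl m Sum.inl_injective.injOn).card ≤
      n.factorial * ∏ k : Fin n, d k := by
  rw [← Fin.prod_univ_val_add_one_mul]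
  refine Finset.card_le_prod_of_forall_apply_lt _ _ ?_
  simp only [Finset.mem_image]
  rintro _ ⟨m, hm, rfl⟩ k
  exact (monomial_le_degreeOf _ hm).trans_lt
    (degreeOf_inl_lt_of_mul_prod_eq_det n f d hd θ hθ (by rintro rfl; simp at hm) k)

/-- Bound on the number of rows of the Dixon matrix: the number of distinct
exponent vectors in the unbarred variables occurring in the support of the
Dixon polynomial `θ` is at most `n! · ∏_k d_k` (`= ∏_k (k+1)·d_k`). -/
theorem dixon_poly_unbarred_monomials_card_le (n : ℕ) (hn : 1 ≤ n)
    (f : Fin (n + 1) → MvPolynomial (Fin n) ℚ) (d : Fin n → ℕ)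
    (hd1 : ∀ k : Fin n, 1 ≤ d k)
    (hd : ∀ j : Fin (n + 1), ∀ k : Fin n, degreeOf k (f j) ≤ d k)
    (θ : MvPolynomial (Fin n ⊕ Fin n) ℚ)
    (hθ : θ * ∏ k : Fin n, (X (Sum.inl k) - X (Sum.inr k)) =
        (dixonCancellationMatrix n f).det) :
    (θ.support.image fun m : (Fin n ⊕ Fin n) →₀ ℕ =>
        Finsupp.comapDomain Sum.inl m Sum.inl_injective.injOn).card ≤
      n.factorial * ∏ k : Fin n, d k :=
  dixon_poly_unbarred_monomials_card_le_general n f d hd θ hθ
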